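/- For every integer k ≥ 0, the Laplace polynomial Q_k has the unique expansion Q_k(t) = Σ_{j ∈ J(k)} β_{k,j} · P_j(t) in the basis of Laplace polynomials P_j, where J(k) = { j : 0 ≤ j ≤ k and j ≡ k (mod 2) } and β_{k,j} = ((k+j)/2)! / j!. -/

import Mathlib

open Polynomial

/-- The Laplace polynomials `P_k`. -/
noncomputable def laplaceP : ℕ → Polynomial ℝ
  | 0 => 1
  | k + 1 => X * laplaceP k + derivative (laplaceP k)

/-- The Laplace polynomials `Q_k`. -/
noncomputable def laplaceQ : ℕ → Polynomial ℝ
  | 0 => 1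
  | k + 1 => laplaceP (k + 1) + derivative (laplaceQ k)

/-- The index set `J(k) = {j : 0 ≤ j ≤ k, j ≡ k (mod 2)}`. -/
def laplaceJ (k : ℕ) : Finset ℕ := (Finset.range (k + 1)).filter (fun j => j % 2 = k % 2)

/-
`P_{k+1} = X P_k + P_k'` raises the degree by one, so `(P_j)` is a polynomial sequence and
hence linearly independent, which gives uniqueness. The sequence is Appell,
`P_{k+1}' = (k+1) P_k`, so differentiating an expansion of `Q_k` shifts every index down by
one; the recursion `Q_{k+1} = P_{k+1} + Q_k'` then turns into the recursion
`β_{k+1,j} = (j+1) β_{k,j+1}`, `β_{k+1,k+1} = 1`, which `((k+j)/2)!/j!` satisfies.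
-/

lemma laplaceP_succ (k : ℕ) : laplaceP (k + 1) = X * laplaceP k + derivative (laplaceP k) := rfl

lemma laplaceQ_succ (k : ℕ) : laplaceQ (k + 1) = laplaceP (k + 1) + derivative (laplaceQ k) :=
  rfl

lemma degree_laplaceP (k : ℕ) : (laplaceP k).degree = k := by
  induction k with
  | zero => simp [laplaceP]
  | succ k ih =>
    have hX : (X * laplaceP k).degree = ((k + 1 : ℕ) : WithBot ℕ) := by
      rw [mul_comm, degree_mul_X, ih]; rfl
    have hder : (derivative (laplaceP k)).degree < (X * laplaceP k).degree := by
      refine (degree_derivative_lt fun h => ?_).trans_le ?_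
      · simp [h] at ih
      · rw [ih, hX]; exact_mod_cast k.le_succ
    rw [laplaceP_succ, degree_add_eq_left_of_degree_lt hder, hX]

lemma linearIndependent_laplaceP : LinearIndependent ℝ laplaceP :=
  (⟨laplaceP, degree_laplaceP⟩ : Polynomial.Sequence ℝ).linearIndependent

lemma eq_of_sum_C_mul_laplaceP_eq {s : Finset ℕ} {β γ : ℕ → ℝ}
    (h : ∑ j ∈ s, C (β j) * laplaceP j = ∑ j ∈ s, C (γ j) * laplaceP j) :
    ∀ j ∈ s, β j = γ j := by
  have hzero : ∑ j ∈ s, (β - γ) j • laplaceP j = 0 := by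
    simp only [Pi.sub_apply, sub_smul, Finset.sum_sub_distrib, smul_eq_C_mul, h, sub_self]
  intro j hj
  exact sub_eq_zero.mp (linearIndependent_iff'.mp linearIndependent_laplaceP s _ hzero j hj)

lemma derivative_laplaceP_succ (k : ℕ) :
    derivative (laplaceP (k + 1)) = C ((k : ℝ) + 1) * laplaceP k := by
  induction k with
  | zero => simp [laplaceP]
  | succ k ih =>
    rw [laplaceP_succ (k + 1), derivative_add, derivative_mul, derivative_X, one_mul, ih,
      derivative_C_mul, laplaceP_succ k]
    push_cast
    simp only [map_add, map_one]
    ring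

/-- `β_{k,j}`, extended by zero to the indices `j ∉ J(k)` of the wrong parity. -/
noncomputable def laplaceCoeff (k j : ℕ) : ℝ :=
  if j % 2 = k % 2 then (((k + j) / 2).factorial : ℝ) / j.factorial else 0

lemma laplaceCoeff_self (k : ℕ) : laplaceCoeff k k = 1 := by
  rw [laplaceCoeff, if_pos rfl, show (k + k) / 2 = k by omega]
  exact div_self (Nat.cast_ne_zero.mpr k.factorial_ne_zero)

lemma laplaceCoeff_succ_self (k : ℕ) : laplaceCoeff (k + 1) k = 0 := by
  rw [laplaceCoeff, if_neg (by omega)]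

lemma laplaceCoeff_succ (k j : ℕ) :
    laplaceCoeff (k + 1) j = laplaceCoeff k (j + 1) * ((j : ℝ) + 1) := by
  unfold laplaceCoeff
  by_cases h : j % 2 = (k + 1) % 2
  · rw [if_pos h, if_pos (by omega), show (k + 1 + j) / 2 = (k + (j + 1)) / 2 by omega,
      Nat.factorial_succ j]
    have := (Nat.cast_ne_zero (R := ℝ)).mpr j.factorial_ne_zero
    push_cast
    field_simp
  · rw [if_neg h, if_neg (by omega), zero_mul]

lemma derivative_sum_C_mul_laplaceP (b : ℕ → ℝ) (k : ℕ) :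
    derivative (∑ j ∈ Finset.range (k + 1), C (b j) * laplaceP j) =
      ∑ j ∈ Finset.range k, C (b (j + 1) * ((j : ℝ) + 1)) * laplaceP j := by
  rw [derivative_sum, Finset.sum_range_succ']
  simp only [derivative_C_mul, derivative_laplaceP_succ, map_mul, mul_assoc, laplaceP.eq_1,
    derivative_one, mul_zero, add_zero]

lemma laplaceQ_eq_sum_range (k : ℕ) :
    laplaceQ k = ∑ j ∈ Finset.range (k + 1), C (laplaceCoeff k j) * laplaceP j := by
  induction k with
  | zero => simp [laplaceQ, laplaceP, laplaceCoeff_self]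
  | succ k ih =>
    rw [laplaceQ_succ, ih, derivative_sum_C_mul_laplaceP, Finset.sum_range_succ,
      Finset.sum_range_succ, laplaceCoeff_self, laplaceCoeff_succ_self]
    simp only [laplaceCoeff_succ, map_one, one_mul, map_zero, zero_mul, add_zero]
    ring

lemma laplaceQ_eq_sum_laplaceJ (k : ℕ) :
    laplaceQ k =
      ∑ j ∈ laplaceJ k, C ((((k + j) / 2).factorial : ℝ) / j.factorial) * laplaceP j := by
  rw [laplaceQ_eq_sum_range, laplaceJ, Finset.sum_filter]
  refine Finset.sum_congr rfl fun j _ => ?_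
  unfold laplaceCoeff
  split_ifs <;> simp

/-- `Q_k` has the unique expansion `Q_k = Σ_{j ∈ J(k)} β_{k,j}·P_j` in the basis of Laplace
polynomials `P_j`, with `β_{k,j} = ((k+j)/2)!/j!`. -/
theorem laplaceQ_expansion (k : ℕ) :
    laplaceQ k =
      (∑ j ∈ laplaceJ k, C ((((k + j) / 2).factorial : ℝ) / j.factorial) * laplaceP j) ∧
    ∀ β : ℕ → ℝ,
      laplaceQ k = (∑ j ∈ laplaceJ k, C (β j) * laplaceP j) →
      ∀ j ∈ laplaceJ k, β j = (((k + j) / 2).factorial : ℝ) / j.factorial :=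
  ⟨laplaceQ_eq_sum_laplaceJ k, fun _ hβ =>
    eq_of_sum_C_mul_laplaceP_eq (hβ.symm.trans (laplaceQ_eq_sum_laplaceJ k))⟩
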